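/- Let A be a line arrangement, let P be a multiple point of A whose vertex has degree at most 2 in the graph G_A, and let A_P = {ℓ ∈ A : the point P lies on ℓ}. If the subarrangement A∖A_P is inductively connected, then A is inductively connected. -/

import Mathlib

noncomputable section
attribute [local instance] Classical.propDecidable

/-- The projective plane: points of `ℙ(ℂ³)`.  A "line" of `ℂP²` with equation
`a x + b y + c z = 0` is identified with the point `(a : b : c)` of the dual plane. -/
abbrev ProjPlane := Projectivization ℂ (Fin 3 → ℂ)

/-- The line `l = (a : b : c)` passes through the point `q = (x : y : z)`,
i.e. `a x + b y + c z = 0` (well defined on representatives). -/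
def incident (l q : ProjPlane) : Prop := ∑ t : Fin 3, l.rep t * q.rep t = 0

/-- The set of indices of lines of the arrangement `A` passing through `q`. -/
def pointSet {ι : Type} [Fintype ι] [DecidableEq ι] (A : ι → ProjPlane) (q : ProjPlane) :
    Finset ι :=
  Finset.univ.filter fun i => incident (A i) q

/-- The combinatorics of the arrangement `A`: the collection of the sets `P(q)` of lines
through `q`, for the points `q` lying on at least two lines (the singular points). -/
def combinatorics {ι : Type} [Fintype ι] [DecidableEq ι] (A : ι → ProjPlane) :
    Finset (Finset ι) :=
  Finset.univ.filter fun P => 2 ≤ P.card ∧ ∃ q, P = pointSet A q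

/-- `τ_i(A, ω)`: the number of singular points of the subarrangement formed by the lines
placed before position `i` that lie on the line placed at position `i` (positions are
`0`-based, given by the order `ω`). -/
def tauArr {ι : Type} [Fintype ι] [DecidableEq ι] (A : ι → ProjPlane) {N : ℕ}
    (ω : ι ≃ Fin N) (i : Fin N) : ℕ :=
  ((combinatorics A).filter fun P =>
    ω.symm i ∈ P ∧ 2 ≤ (P.filter fun j => ω j < i).card).card

/-- An arrangement is inductively connected if it admits an order `ω` with `τ_i ≤ 2`
for all `i`. -/
def InductivelyConnectedArr {ι : Type} [Fintype ι] [DecidableEq ι] (A : ι → ProjPlane) : Prop :=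
  ∃ ω : ι ≃ Fin (Fintype.card ι), ∀ i, tauArr A ω i ≤ 2

/-!
Order the lines of `A ∖ A_P` by an inductively connected order of that subarrangement and append
the lines through `P`. Since no line through `P` precedes them, the lines of the first block meet
their predecessors exactly as in `A ∖ A_P`. A point counted by `τ` at a later line `ℓ ∋ P` lies on
`ℓ` and two earlier lines, so it is either `P` or a multiple point adjacent to `P` on `ℓ`; as two
lines meet only once, each neighbour of `P` lies on a single line through `P`, so at most one such
line carries two neighbours. Putting that line first, before `P` becomes a singular point, keeps
every `τ_i ≤ 2`.
-/

namespace Projectivization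
open Matrix

theorem mk_eq_mk_crossProduct_of_dotProduct_eq_zero {F : Type*} [Field F] {p u v : Fin 3 → F}
    (hp : p ≠ 0) (huv : u ⨯₃ v ≠ 0) (hu : p ⬝ᵥ u = 0) (hv : p ⬝ᵥ v = 0) :
    mk F p hp = mk F (u ⨯₃ v) huv := by
  rw [mk_eq_mk_iff_crossProduct_eq_zero, cross_cross_eq_smul_sub_smul', hv, dotProduct_comm,
    hu, zero_smul, zero_smul, sub_zero]

end Projectivization

open Projectivization Matrix Finset

theorem incident_iff_dotProduct {l q : ProjPlane} : incident l q ↔ l.rep ⬝ᵥ q.rep = 0 :=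
  Iff.rfl

theorem eq_of_incident_of_ne {l₁ l₂ p₁ p₂ : ProjPlane} (hl : l₁ ≠ l₂)
    (h₁₁ : incident l₁ p₁) (h₂₁ : incident l₂ p₁) (h₁₂ : incident l₁ p₂) (h₂₂ : incident l₂ p₂) :
    p₁ = p₂ := by
  have hcross : l₁.rep ⨯₃ l₂.rep ≠ 0 := by
    rwa [ne_eq, ← mk_eq_mk_iff_crossProduct_eq_zero l₁.rep_nonzero l₂.rep_nonzero, mk_rep, mk_rep]
  have key : ∀ p : ProjPlane, incident l₁ p → incident l₂ p → p = mk ℂ _ hcross := by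
    intro p h₁ h₂
    rw [incident_iff_dotProduct, dotProduct_comm] at h₁ h₂
    rw [← mk_eq_mk_crossProduct_of_dotProduct_eq_zero p.rep_nonzero hcross h₁ h₂, mk_rep]
  rw [key p₁ h₁₁ h₂₁, key p₂ h₁₂ h₂₂]

section Orders

variable {ι : Type*}

def appendOrder (p : ι → Prop) [DecidablePred p] {a b : ℕ} (ω₁ : {x // p x} ≃ Fin a)
    (ω₂ : {x // ¬ p x} ≃ Fin b) : ι ≃ Fin (a + b) :=
  (Equiv.sumCompl p).symm.trans ((ω₁.sumCongr ω₂).trans finSumFinEquiv)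

theorem appendOrder_apply_of_pos {p : ι → Prop} [DecidablePred p] {a b : ℕ}
    (ω₁ : {x // p x} ≃ Fin a) (ω₂ : {x // ¬ p x} ≃ Fin b) {x : ι} (hx : p x) :
    appendOrder p ω₁ ω₂ x = Fin.castAdd b (ω₁ ⟨x, hx⟩) := by
  simp [appendOrder, Equiv.sumCompl_symm_apply_of_pos hx]

theorem appendOrder_apply_of_neg {p : ι → Prop} [DecidablePred p] {a b : ℕ}
    (ω₁ : {x // p x} ≃ Fin a) (ω₂ : {x // ¬ p x} ≃ Fin b) {x : ι} (hx : ¬ p x) :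
    appendOrder p ω₁ ω₂ x = Fin.natAdd a (ω₂ ⟨x, hx⟩) := by
  simp [appendOrder, Equiv.sumCompl_symm_apply_of_neg hx]

theorem exists_equivFin_forall_ne_zero_le_one {α : Type*} [Fintype α] (f : α → ℕ)
    (hf : ∀ x y, 2 ≤ f x → 2 ≤ f y → x = y) :
    ∃ e : α ≃ Fin (Fintype.card α), ∀ x, (e x : ℕ) ≠ 0 → f x ≤ 1 := by
  by_cases hheavy : ∃ x₀, 2 ≤ f x₀
  · obtain ⟨x₀, hx₀⟩ := hheavy
    have hpos : 0 < Fintype.card α := Fintype.card_pos_iff.2 ⟨x₀⟩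
    let e₀ := Fintype.equivFin α
    refine ⟨e₀.trans (Equiv.swap (e₀ x₀) ⟨0, hpos⟩), fun x hx => ?_⟩
    by_contra! hfx
    obtain rfl := hf x x₀ hfx hx₀
    simp at hx
  · simp only [not_exists, not_le] at hheavy
    exact ⟨Fintype.equivFin α, fun x _ => Nat.le_of_lt_succ (hheavy x)⟩

theorem card_filter_lt_subtype {p : ι → Prop} [DecidablePred p] {N M : ℕ} {ω : ι ≃ Fin N}
    {ω' : {x // p x} ≃ Fin M}
    (hω : ∀ y : {x // p x}, (ω y : ℕ) = ω' y) (hinit : ∀ y, ¬ p y → M ≤ ω y)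
    (x : {x // p x}) (P : Finset ι) :
    #((P.subtype p).filter fun j => ω' j < ω' x) = #(P.filter fun j => ω j < ω x) := by
  have hp : ∀ j ∈ P.filter (fun j => ω j < ω x), p j := fun j hj => by
    have hlt : (ω j : ℕ) < ω' x := hω x ▸ (mem_filter.1 hj).2
    by_contra hj'
    exact absurd ((ω' x).isLt.trans_le (hinit j hj')) hlt.not_gt
  rw [← filter_true_of_mem hp, ← card_subtype p]
  refine congrArg card (ext fun y => ?_)
  simp only [mem_filter, mem_subtype, Fin.lt_def, hω]

end Orders

section Arrangement

variable {ι : Type} [Fintype ι] [DecidableEq ι] {A : ι → ProjPlane}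

theorem mem_pointSet {q : ProjPlane} {i : ι} : i ∈ pointSet A q ↔ incident (A i) q := by
  simp [pointSet]

theorem card_inter_pointSet_le_one (hA : Function.Injective A) {q₁ q₂ : ProjPlane}
    (hq : q₁ ≠ q₂) : #(pointSet A q₁ ∩ pointSet A q₂) ≤ 1 := by
  refine card_le_one.2 fun i hi j hj => by_contra fun hij => hq ?_
  simp only [mem_inter, mem_pointSet] at hi hj
  exact eq_of_incident_of_ne (fun h => hij (hA h)) hi.1 hj.1 hi.2 hj.2

theorem mem_combinatorics {P : Finset ι} :
    P ∈ combinatorics A ↔ 2 ≤ #P ∧ ∃ q, P = pointSet A q := by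
  simp [combinatorics]

theorem pointSet_subtype (p : ι → Prop) [DecidablePred p] (q : ProjPlane) :
    pointSet (fun y : {x // p x} => A y) q = (pointSet A q).subtype p := by
  ext y
  simp [mem_pointSet]

theorem inductivelyConnectedArr_of_order {N : ℕ} (ω : ι ≃ Fin N) (h : ∀ i, tauArr A ω i ≤ 2) :
    InductivelyConnectedArr A := by
  obtain rfl : Fintype.card ι = N := by simpa using Fintype.card_congr ω
  exact ⟨ω, h⟩

variable {N : ℕ}

def tauPoints (A : ι → ProjPlane) (ω : ι ≃ Fin N) (i : Fin N) : Finset (Finset ι) :=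
  (combinatorics A).filter fun P => ω.symm i ∈ P ∧ 2 ≤ #(P.filter fun j => ω j < i)

theorem tauArr_eq_card_tauPoints (ω : ι ≃ Fin N) (i : Fin N) :
    tauArr A ω i = #(tauPoints A ω i) :=
  rfl

theorem mem_tauPoints {ω : ι ≃ Fin N} {i : Fin N} {P : Finset ι} :
    P ∈ tauPoints A ω i ↔
      P ∈ combinatorics A ∧ ω.symm i ∈ P ∧ 2 ≤ #(P.filter fun j => ω j < i) :=
  mem_filter

theorem three_le_card_of_mem_tauPoints {ω : ι ≃ Fin N} {x : ι} {P : Finset ι}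
    (hP : P ∈ tauPoints A ω (ω x)) : 3 ≤ #P := by
  rw [mem_tauPoints, Equiv.symm_apply_apply] at hP
  obtain ⟨-, hxP, hbefore⟩ := hP
  have hx : x ∉ P.filter fun j => ω j < ω x := by simp
  calc 3 ≤ #(insert x (P.filter fun j => ω j < ω x)) := by rw [card_insert_of_notMem hx]; omega
    _ ≤ #P := card_le_card (insert_subset hxP (filter_subset _ _))

theorem tauArr_le_tauArr_subtype (hA : Function.Injective A) {p : ι → Prop} [DecidablePred p]
    {M : ℕ} {ω : ι ≃ Fin N} {ω' : {x // p x} ≃ Fin M}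
    (hω : ∀ y : {x // p x}, (ω y : ℕ) = ω' y) (hinit : ∀ y, ¬ p y → M ≤ ω y)
    (x : {x // p x}) :
    tauArr A ω (ω x) ≤ tauArr (fun y : {x // p x} => A y) ω' (ω' x) := by
  simp only [tauArr_eq_card_tauPoints]
  refine card_le_card_of_injOn (fun P => P.subtype p) (fun P hP => ?_) fun P₁ hP₁ P₂ hP₂ h => ?_
  · rw [mem_coe, mem_tauPoints, Equiv.symm_apply_apply] at hP
    obtain ⟨hPcomb, hxP, hbefore⟩ := hP
    obtain ⟨-, q', rfl⟩ := mem_combinatorics.1 hPcomb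
    rw [← card_filter_lt_subtype hω hinit x] at hbefore
    rw [mem_coe, mem_tauPoints, Equiv.symm_apply_apply]
    exact ⟨mem_combinatorics.2
      ⟨hbefore.trans (card_filter_le _ _), q', (pointSet_subtype p q').symm⟩, mem_subtype.2 hxP,
      hbefore⟩
  · rw [mem_coe, mem_tauPoints, Equiv.symm_apply_apply] at hP₁ hP₂
    obtain ⟨-, q₁, rfl⟩ := mem_combinatorics.1 hP₁.1
    obtain ⟨-, q₂, rfl⟩ := mem_combinatorics.1 hP₂.1
    rw [← card_filter_lt_subtype hω hinit x] at hP₁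
    have hfilter : (pointSet A q₁).filter p = (pointSet A q₂).filter p := by
      rw [← subtype_map, ← subtype_map]
      exact congrArg _ h
    have hinter : 2 ≤ #(pointSet A q₁ ∩ pointSet A q₂) := calc
      2 ≤ #((pointSet A q₁).subtype p) := hP₁.2.2.trans (card_filter_le _ _)
      _ = #((pointSet A q₁).filter p) := card_subtype _ _
      _ ≤ #(pointSet A q₁ ∩ pointSet A q₂) := card_le_card fun y hy =>
        mem_inter.2 ⟨(mem_filter.1 hy).1, (mem_filter.1 (hfilter ▸ hy)).1⟩
    obtain rfl : q₁ = q₂ := by_contra fun hq => (card_inter_pointSet_le_one hA hq).not_gt hinter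
    rfl

def adjacentMultiplePoints (A : ι → ProjPlane) (q : ProjPlane) : Finset (Finset ι) :=
  (combinatorics A).filter fun P' =>
    3 ≤ P'.card ∧ P' ≠ pointSet A q ∧ (P' ∩ pointSet A q).Nonempty

theorem sum_card_filter_adjacentMultiplePoints_le (hA : Function.Injective A) (q : ProjPlane) :
    ∑ x ∈ pointSet A q, #((adjacentMultiplePoints A q).filter (x ∈ ·)) ≤
      #(adjacentMultiplePoints A q) := by
  calc ∑ x ∈ pointSet A q, #((adjacentMultiplePoints A q).filter (x ∈ ·))
      = ∑ P ∈ adjacentMultiplePoints A q, #((pointSet A q).filter (· ∈ P)) := by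
        simp only [card_filter]
        exact sum_comm
    _ ≤ ∑ _P ∈ adjacentMultiplePoints A q, 1 := sum_le_sum fun P hP => by
        obtain ⟨hPcomb, -, hPq, -⟩ := mem_filter.1 hP
        obtain ⟨-, q', rfl⟩ := mem_combinatorics.1 hPcomb
        rw [filter_mem_eq_inter]
        exact card_inter_pointSet_le_one hA fun h => hPq (h ▸ rfl)
    _ = #(adjacentMultiplePoints A q) := (card_eq_sum_ones _).symm

theorem eq_of_two_le_card_filter_adjacentMultiplePoints (hA : Function.Injective A)
    {q : ProjPlane} (hdeg : #(adjacentMultiplePoints A q) ≤ 2) {x y : ι}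
    (hx : x ∈ pointSet A q) (hy : y ∈ pointSet A q)
    (hx2 : 2 ≤ #((adjacentMultiplePoints A q).filter (x ∈ ·)))
    (hy2 : 2 ≤ #((adjacentMultiplePoints A q).filter (y ∈ ·))) : x = y := by
  by_contra hxy
  have hpair := sum_le_sum_of_subset
    (f := fun z => #((adjacentMultiplePoints A q).filter (z ∈ ·)))
    (insert_subset hx (singleton_subset_iff.2 hy))
  rw [sum_pair hxy] at hpair
  have := sum_card_filter_adjacentMultiplePoints_le hA q
  omega

theorem tauPoints_subset_insert {q : ProjPlane} {ω : ι ≃ Fin N} {x : ι}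
    (hx : x ∈ pointSet A q) :
    tauPoints A ω (ω x) ⊆
      insert (pointSet A q) ((adjacentMultiplePoints A q).filter (x ∈ ·)) := by
  intro P hP
  have h3 := three_le_card_of_mem_tauPoints hP
  rw [mem_tauPoints, Equiv.symm_apply_apply] at hP
  obtain ⟨hPcomb, hxP, -⟩ := hP
  refine mem_insert.2 (or_iff_not_imp_left.2 fun hPq => ?_)
  exact mem_filter.2 ⟨mem_filter.2 ⟨hPcomb, h3, hPq, x, mem_inter.2 ⟨hxP, hx⟩⟩, hxP⟩

theorem tauArr_le_card_filter_adjacentMultiplePoints_add_one {q : ProjPlane} {ω : ι ≃ Fin N}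
    {x : ι} (hx : x ∈ pointSet A q) :
    tauArr A ω (ω x) ≤ #((adjacentMultiplePoints A q).filter (x ∈ ·)) + 1 :=
  (card_le_card (tauPoints_subset_insert hx)).trans (card_insert_le _ _)

theorem tauArr_le_card_filter_adjacentMultiplePoints {q : ProjPlane} {ω : ι ≃ Fin N} {x : ι}
    (hx : x ∈ pointSet A q) (hfirst : ∀ y ∈ pointSet A q, ω x ≤ ω y) :
    tauArr A ω (ω x) ≤ #((adjacentMultiplePoints A q).filter (x ∈ ·)) := by
  have hq : pointSet A q ∉ tauPoints A ω (ω x) := by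
    rw [mem_tauPoints, Equiv.symm_apply_apply,
      filter_false_of_mem fun y hy => (hfirst y hy).not_gt]
    simp
  exact card_le_card ((subset_insert_iff_of_notMem hq).1 (tauPoints_subset_insert hx))

end Arrangement

theorem statement8_general {n : ℕ} (A : Fin n → ProjPlane) (hA : Function.Injective A)
    (q : ProjPlane)
    (hdeg : (((combinatorics A).filter fun P' =>
        3 ≤ P'.card ∧ P' ≠ pointSet A q ∧ (P' ∩ pointSet A q).Nonempty)).card ≤ 2)
    (hsub : InductivelyConnectedArr (fun k : {x : Fin n // x ∉ pointSet A q} => A k.val)) :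
    InductivelyConnectedArr A := by
  set S := pointSet A q
  set degree : Fin n → ℕ := fun x => #((adjacentMultiplePoints A q).filter (x ∈ ·))
  obtain ⟨ω, hω⟩ := hsub
  obtain ⟨e, he⟩ := exists_equivFin_forall_ne_zero_le_one (fun x : {x // ¬ x ∉ S} => degree x)
    fun x y hx hy => Subtype.ext <| eq_of_two_le_card_filter_adjacentMultiplePoints hA hdeg
      (not_not.1 x.2) (not_not.1 y.2) hx hy
  refine inductivelyConnectedArr_of_order (appendOrder (· ∉ S) ω e) fun i => ?_
  obtain ⟨x, rfl⟩ := (appendOrder (· ∉ S) ω e).surjective i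
  by_cases hx : x ∉ S
  · have hprefix : ∀ y : {x // x ∉ S}, (appendOrder (· ∉ S) ω e y : ℕ) = ω y := fun y => by
      simp [appendOrder_apply_of_pos ω e y.2]
    have hsuffix : ∀ y, ¬ y ∉ S → Fintype.card {x // x ∉ S} ≤ appendOrder (· ∉ S) ω e y :=
      fun y hy => by simp [appendOrder_apply_of_neg ω e hy]
    exact (tauArr_le_tauArr_subtype hA hprefix hsuffix ⟨x, hx⟩).trans (hω _)
  · have hxS : x ∈ S := not_not.1 hx
    by_cases h0 : (e ⟨x, hx⟩ : ℕ) = 0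
    · refine (tauArr_le_card_filter_adjacentMultiplePoints hxS fun y hy => ?_).trans
        ((card_filter_le _ _).trans hdeg)
      simp [appendOrder_apply_of_neg ω e hx, appendOrder_apply_of_neg ω e (not_not.2 hy),
        Fin.le_def, h0]
    · exact (tauArr_le_card_filter_adjacentMultiplePoints_add_one hxS).trans
        (Nat.succ_le_succ (he _ h0))

/-- Let `P = pointSet A q` be a multiple point of `A` whose vertex has
degree at most `2` in `G_A`, and `A_P` the set of lines through `P`.  If `A ∖ A_P` is
inductively connected, then so is `A`. -/
theorem statement8 {n : ℕ} (A : Fin n → ProjPlane) (hA : Function.Injective A)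
    (q : ProjPlane) (hmult : 3 ≤ (pointSet A q).card)
    (hdeg : (((combinatorics A).filter fun P' =>
        3 ≤ P'.card ∧ P' ≠ pointSet A q ∧ (P' ∩ pointSet A q).Nonempty)).card ≤ 2)
    (hsub : InductivelyConnectedArr (fun k : {x : Fin n // x ∉ pointSet A q} => A k.val)) :
    InductivelyConnectedArr A :=
  statement8_general A hA q hdeg hsub
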